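/- Let T > 0, let β : ℝⁿ → ℝⁿ be Lipschitz with constant K_β, let K ≥ 0, let S : [0,T] × ℝ^{n−1} → ℝ be continuous with |S(s,a) − S(s,b)| ≤ K ‖a−b‖ for all s, a, b, and let ω̂ : [0,T] → ℝⁿ be continuous. Call (Ŷ, L̂) a solution with initial value x if Ŷ : [0,T] → ℝⁿ is continuous, L̂ : [0,T] → ℝ is continuous and nondecreasing with L̂(0)=0, Ŷ(s) = x − ∫₀ˢ β(Ŷ(u)) du + ω̂(s) − ω̂(0) − L̂(s) e₁ for all s (e₁ the first standard basis vector), Ŷ₁(s) ≤ S(s, Ŷ_{(−1)}(s)) for all s, and the Lebesgue–Stieltjes measure dL̂ is concentrated on { u : Ŷ₁(u) = S(u, Ŷ_{(−1)}(u)) }. If (Ŷ, L̂) and (Ŷ‡, L̂‡) are solutions with initial values x and x‡ respectively, then sup_{0≤s≤T} ‖Ŷ(s) − Ŷ‡(s)‖ ≤ (3 + K) ‖x − x‡‖ e^{(3+K) K_β T}. -/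
import Mathlib


open MeasureTheory

noncomputable section

/-- `ℝⁿ` (with Euclidean norm) split as the first coordinate times the remaining `m = n−1`
coordinates: `Hyp m = ℝ ×₂ ℝᵐ` with the `L²` (Euclidean) product norm. -/
abbrev Hyp (m : ℕ) := WithLp 2 (ℝ × EuclideanSpace ℝ (Fin m))

/-- First coordinate `x₁` of `x ∈ ℝⁿ`. -/
def hypFst {m : ℕ} (x : Hyp m) : ℝ := (WithLp.equiv 2 (ℝ × EuclideanSpace ℝ (Fin m)) x).1

/-- Remaining coordinates `x_{(−1)}` of `x ∈ ℝⁿ`. -/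
def hypSnd {m : ℕ} (x : Hyp m) : EuclideanSpace ℝ (Fin m) :=
  (WithLp.equiv 2 (ℝ × EuclideanSpace ℝ (Fin m)) x).2

/-- Assemble `x ∈ ℝⁿ` from `x₁` and `x_{(−1)}`. -/
def hypMk {m : ℕ} (a : ℝ) (b : EuclideanSpace ℝ (Fin m)) : Hyp m :=
  (WithLp.equiv 2 (ℝ × EuclideanSpace ℝ (Fin m))).symm (a, b)

/-- `(Ŷ, L̂)` is a solution of the Skorohod-type equation with initial value `x`:
`Ŷ(s) = x − ∫₀ˢ β(Ŷ(u)) du + ω̂(s) − ω̂(0) − L̂(s)e₁`, where `L̂` is continuous,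
nondecreasing, vanishes at `0`, the first coordinate of `Ŷ` stays below the moving
surface `S(s,·)`, and the Lebesgue–Stieltjes measure `dL̂` is concentrated on the contact
set `{u : Ŷ₁(u) = S(u, Ŷ_{(−1)}(u))}` (equivalently, for continuous data, `L̂` is
constant on every subinterval of `[0,T]` on which `Ŷ₁ < S(·, Ŷ_{(−1)})`). -/
def IsSkdSol (m : ℕ) (T : ℝ) (β : Hyp m → Hyp m)
    (S : ℝ → EuclideanSpace ℝ (Fin m) → ℝ) (ωh : ℝ → Hyp m)
    (x : Hyp m) (Y : ℝ → Hyp m) (L : ℝ → ℝ) : Prop :=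
  ContinuousOn Y (Set.Icc 0 T) ∧ ContinuousOn L (Set.Icc 0 T) ∧
  MonotoneOn L (Set.Icc 0 T) ∧ L 0 = 0 ∧
  (∀ s ∈ Set.Icc (0 : ℝ) T,
    Y s = x - (∫ u in (0 : ℝ)..s, β (Y u)) + ωh s - ωh 0 - L s • hypMk 1 0) ∧
  (∀ s ∈ Set.Icc (0 : ℝ) T, hypFst (Y s) ≤ S s (hypSnd (Y s))) ∧
  (∀ a b : ℝ, 0 ≤ a → a ≤ b → b ≤ T →
    (∀ u ∈ Set.Icc a b, hypFst (Y u) < S u (hypSnd (Y u))) → L a = L b)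

variable {m : ℕ}

lemma hypFst_sub (a b : Hyp m) : hypFst (a - b) = hypFst a - hypFst b := rfl
lemma hypSnd_sub (a b : Hyp m) : hypSnd (a - b) = hypSnd a - hypSnd b := rfl
lemma hypFst_smul_e (c : ℝ) : hypFst (c • (hypMk 1 (0 : EuclideanSpace ℝ (Fin m)))) = c := by
  simp [hypFst, hypMk]
lemma hypSnd_smul_e (c : ℝ) : hypSnd (c • (hypMk 1 (0 : EuclideanSpace ℝ (Fin m)))) = 0 := by
  simp [hypSnd, hypMk]
lemma norm_hypMk_e : ‖(hypMk 1 (0 : EuclideanSpace ℝ (Fin m)))‖ = 1 := by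
  rw [WithLp.prod_norm_eq_of_L2]
  simp [hypMk]
lemma abs_hypFst_le (z : Hyp m) : |hypFst z| ≤ ‖z‖ := by
  rw [WithLp.prod_norm_eq_of_L2]
  have h1 : |hypFst z| = Real.sqrt (‖z.fst‖ ^ 2) := by
    rw [Real.sqrt_sq (norm_nonneg _)]; rfl
  rw [h1]
  exact Real.sqrt_le_sqrt (le_add_of_nonneg_right (sq_nonneg _))
lemma norm_hypSnd_le (z : Hyp m) : ‖hypSnd z‖ ≤ ‖z‖ := by
  rw [WithLp.prod_norm_eq_of_L2]
  have h1 : ‖hypSnd z‖ = Real.sqrt (‖z.snd‖ ^ 2) := by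
    rw [Real.sqrt_sq (norm_nonneg _)]; rfl
  rw [h1]
  exact Real.sqrt_le_sqrt (le_add_of_nonneg_left (sq_nonneg _))
lemma continuous_hypFst : Continuous (hypFst (m := m)) :=
  continuous_fst.comp (WithLp.prodContinuousLinearEquiv 2 ℝ ℝ (EuclideanSpace ℝ (Fin m))).continuous
lemma continuous_hypSnd : Continuous (hypSnd (m := m)) :=
  continuous_snd.comp (WithLp.prodContinuousLinearEquiv 2 ℝ ℝ (EuclideanSpace ℝ (Fin m))).continuous
lemma lip_continuous {Kβ : ℝ} (hKβ : 0 ≤ Kβ) {β : Hyp m → Hyp m}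
    (hβ : ∀ x y, ‖β x - β y‖ ≤ Kβ * ‖x - y‖) : Continuous β := by
  have : LipschitzWith ⟨Kβ, hKβ⟩ β := LipschitzWith.of_dist_le_mul (by
    intro a b; rw [dist_eq_norm, dist_eq_norm]; exact hβ a b)
  exact this.continuous

lemma skd_integrable {T : ℝ} {β : Hyp m → Hyp m} (hβc : Continuous β) {Y : ℝ → Hyp m}
    (hY : ContinuousOn Y (Set.Icc 0 T)) {u : ℝ} (hu : u ∈ Set.Icc 0 T) :
    IntervalIntegrable (fun r => β (Y r)) volume 0 u := by
  apply ContinuousOn.intervalIntegrable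
  apply (hβc.comp_continuousOn hY).mono
  rw [Set.uIcc_of_le hu.1]
  exact Set.Icc_subset_Icc_right hu.2

/-- difference of the two integral equations -/
lemma skd_diff_eq {T : ℝ} {β : Hyp m → Hyp m} (hβc : Continuous β)
    {S : ℝ → EuclideanSpace ℝ (Fin m) → ℝ} {ωh : ℝ → Hyp m}
    {x x' : Hyp m} {Y Y' : ℝ → Hyp m} {L L' : ℝ → ℝ}
    (h1 : IsSkdSol m T β S ωh x Y L) (h2 : IsSkdSol m T β S ωh x' Y' L')
    {u : ℝ} (hu : u ∈ Set.Icc 0 T) :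
    Y u - Y' u = ((x - x') - ∫ r in (0 : ℝ)..u, (β (Y r) - β (Y' r)))
      - (L u - L' u) • (hypMk 1 0) := by
  have hIsub : (∫ r in (0 : ℝ)..u, (β (Y r) - β (Y' r)))
      = (∫ r in (0 : ℝ)..u, β (Y r)) - ∫ r in (0 : ℝ)..u, β (Y' r) :=
    intervalIntegral.integral_sub (skd_integrable hβc h1.1 hu) (skd_integrable hβc h2.1 hu)
  rw [hIsub, h1.2.2.2.2.1 u hu, h2.2.2.2.2.1 u hu, sub_smul]
  abel
lemma skd_onesided {T : ℝ} (hT : 0 < T) {Kβ : ℝ} (hKβ : 0 ≤ Kβ)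
    {β : Hyp m → Hyp m} (hβ : ∀ x y, ‖β x - β y‖ ≤ Kβ * ‖x - y‖)
    {K : ℝ} (hK : 0 ≤ K)
    {S : ℝ → EuclideanSpace ℝ (Fin m) → ℝ}
    (hSlip : ∀ s a b, |S s a - S s b| ≤ K * ‖a - b‖)
    {ωh : ℝ → Hyp m} {x x' : Hyp m} {Y Y' : ℝ → Hyp m} {L L' : ℝ → ℝ}
    (h1 : IsSkdSol m T β S ωh x Y L) (h2 : IsSkdSol m T β S ωh x' Y' L')
    {s : ℝ} (hs : s ∈ Set.Icc 0 T) :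
    ∃ u ∈ Set.Icc 0 s, L s - L' s ≤
      max 0 (hypFst ((x - x') - ∫ r in (0 : ℝ)..u, (β (Y r) - β (Y' r)))
        + K * ‖hypSnd ((x - x') - ∫ r in (0 : ℝ)..u, (β (Y r) - β (Y' r)))‖) := by
  rcases le_or_gt (L s - L' s) 0 with hgs | hgs
  · exact ⟨0, Set.left_mem_Icc.2 hs.1, hgs.trans (le_max_left _ _)⟩
  obtain ⟨hY, hL, hLmono, hL0, heq, hsurf, hflat⟩ := h1
  obtain ⟨hY', hL', hLmono', hL0', heq', hsurf', hflat'⟩ := h2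
  have h1' : IsSkdSol m T β S ωh x Y L :=
    ⟨hY, hL, hLmono, hL0, heq, hsurf, hflat⟩
  have h2' : IsSkdSol m T β S ωh x' Y' L' :=
    ⟨hY', hL', hLmono', hL0', heq', hsurf', hflat'⟩
  have hβc : Continuous β := lip_continuous hKβ hβ
  set e : Hyp m := hypMk 1 0 with he
  set c : ℝ → ℝ := fun u => max 0 (min u T) with hcdef
  have hccont : Continuous c := continuous_const.max (continuous_id.min continuous_const)
  have hcmem : ∀ u, c u ∈ Set.Icc 0 T :=
    fun u => ⟨le_max_left _ _, max_le hT.le (min_le_right _ _)⟩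
  have hceq : ∀ u ∈ Set.Icc (0 : ℝ) T, c u = u := by
    intro u hu
    simp only [hcdef]
    rw [min_eq_left hu.2, max_eq_right hu.1]
  have hYc : Continuous fun u => Y (c u) := hY.comp_continuous hccont hcmem
  have hY'c : Continuous fun u => Y' (c u) := hY'.comp_continuous hccont hcmem
  set F : ℝ → Hyp m := fun r => β (Y (c r)) - β (Y' (c r)) with hFdef
  have hFcont : Continuous F := (hβc.comp hYc).sub (hβc.comp hY'c)
  have hIeq : ∀ u ∈ Set.Icc (0 : ℝ) T,
      (∫ r in (0 : ℝ)..u, (β (Y r) - β (Y' r))) = ∫ r in (0 : ℝ)..u, F r := by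
    intro u hu
    apply intervalIntegral.integral_congr
    intro r hr
    rw [Set.uIcc_of_le hu.1] at hr
    have hr' : r ∈ Set.Icc (0 : ℝ) T := Set.Icc_subset_Icc_right hu.2 hr
    simp only [hFdef, hceq r hr']
  set fc : ℝ → Hyp m := fun u => (x - x') - ∫ r in (0 : ℝ)..u, F r with hfcdef
  have hfccont : Continuous fc := continuous_const.sub
    (intervalIntegral.continuous_primitive (fun a b => hFcont.intervalIntegrable a b) 0)
  set h : ℝ → ℝ := fun u => hypFst (fc u) + K * ‖hypSnd (fc u)‖ with hhdef
  have hhcont : Continuous h := by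
    apply ((continuous_hypFst.comp hfccont).add
      (continuous_const.mul (continuous_hypSnd.comp hfccont).norm))
  -- maximum of h on [0, s]
  obtain ⟨u₀, hu₀mem, hu₀max⟩ := isCompact_Icc.exists_isMaxOn
    (Set.nonempty_Icc.2 hs.1) (hhcont.continuousOn (s := Set.Icc 0 s))
  refine ⟨u₀, hu₀mem, ?_⟩
  have hu₀T : u₀ ∈ Set.Icc (0 : ℝ) T :=
    ⟨hu₀mem.1, hu₀mem.2.trans hs.2⟩
  rw [hIeq u₀ hu₀T]
  by_contra hM
  push_neg at hM
  set M : ℝ := max 0 (h u₀) with hMdef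
  set g : ℝ → ℝ := fun u => L u - L' u with hgdef
  have hgc : ContinuousOn g (Set.Icc 0 T) := hL.sub hL'
  have hMnn : 0 ≤ M := le_max_left _ _
  set A : Set ℝ := Set.Icc 0 s ∩ g ⁻¹' Set.Iic M with hAdef
  have hA0 : (0 : ℝ) ∈ A := by
    refine ⟨Set.left_mem_Icc.2 hs.1, ?_⟩
    simp only [Set.mem_preimage, Set.mem_Iic, hgdef, hL0, hL0', sub_zero]
    exact hMnn
  have hsubT : Set.Icc (0 : ℝ) s ⊆ Set.Icc 0 T := Set.Icc_subset_Icc_right hs.2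
  have hAclosed : IsClosed A :=
    (hgc.mono hsubT).preimage_isClosed_of_isClosed isClosed_Icc isClosed_Iic
  have hbddA : BddAbove A := ⟨s, fun u hu => hu.1.2⟩
  set t : ℝ := sSup A with htdef
  have ht : t ∈ A := hAclosed.csSup_mem ⟨0, hA0⟩ hbddA
  have htmem : t ∈ Set.Icc (0 : ℝ) s := ht.1
  have hgt : g t ≤ M := ht.2
  have hts : t < s := by
    rcases lt_or_eq_of_le htmem.2 with h' | h'
    · exact h'
    · exfalso; rw [h'] at hgt; exact absurd hM (not_lt.2 hgt)
  have hgu : ∀ u ∈ Set.Ioc t s, M < g u := by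
    intro u hu
    by_contra hle
    push_neg at hle
    have humem : u ∈ A := ⟨⟨htmem.1.trans hu.1.le, hu.2⟩, hle⟩
    exact absurd (le_csSup hbddA humem) (not_le.2 hu.1)
  have hLts : L t < L s := by
    have hmono' : L' t ≤ L' s := hLmono' (hsubT htmem) hs htmem.2
    simp only [hgdef] at hgt hM
    linarith
  -- there is a contact point of Y in (t, s]
  have hcontact : ∃ u ∈ Set.Ioc t s, S u (hypSnd (Y u)) ≤ hypFst (Y u) := by
    by_contra hnc
    push_neg at hnc
    have hconst : ∀ a ∈ Set.Ioc t s, L a = L s := by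
      intro a ha
      refine hflat a s (htmem.1.trans ha.1.le) ha.2 hs.2 ?_
      intro u hu
      exact hnc u ⟨lt_of_lt_of_le ha.1 hu.1, hu.2⟩
    have hLt : ContinuousWithinAt L (Set.Ioc t s) t :=
      (hL t (hsubT htmem)).mono
        (fun u hu => hsubT ⟨htmem.1.trans hu.1.le, hu.2⟩)
    have hlim2 : Filter.Tendsto L (nhdsWithin t (Set.Ioc t s)) (nhds (L s)) := by
      refine Filter.Tendsto.congr' ?_ tendsto_const_nhds
      exact Filter.eventuallyEq_of_mem self_mem_nhdsWithin
        (fun u hu => (hconst u hu).symm)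
    haveI hne : (nhdsWithin t (Set.Ioc t s)).NeBot := by
      rw [nhdsWithin_Ioc_eq_nhdsGT hts]; infer_instance
    exact absurd (tendsto_nhds_unique hLt hlim2) (ne_of_lt hLts)
  obtain ⟨u, humem, hcon⟩ := hcontact
  have huIcc : u ∈ Set.Icc (0 : ℝ) s := ⟨htmem.1.trans humem.1.le, humem.2⟩
  have huT : u ∈ Set.Icc (0 : ℝ) T := hsubT huIcc
  -- the difference equation at u
  have hdiff : Y u - Y' u = fc u - (g u) • e := by
    rw [hfcdef]
    simp only
    rw [← hIeq u huT]
    exact skd_diff_eq hβc h1' h2' huT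
  have hfst : hypFst (Y u) - hypFst (Y' u) = hypFst (fc u) - g u := by
    have h0 := congrArg hypFst hdiff
    rw [hypFst_sub, hypFst_sub] at h0
    rw [h0, he, hypFst_smul_e]
  have hsnd : hypSnd (Y u) - hypSnd (Y' u) = hypSnd (fc u) := by
    have h0 := congrArg hypSnd hdiff
    rw [hypSnd_sub, hypSnd_sub] at h0
    rw [h0, he, hypSnd_smul_e, sub_zero]
  have hsurf2 : hypFst (Y' u) ≤ S u (hypSnd (Y' u)) := hsurf' u huT
  have hSest : -(K * ‖hypSnd (Y u) - hypSnd (Y' u)‖)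
      ≤ S u (hypSnd (Y u)) - S u (hypSnd (Y' u)) := by
    have h0 := (abs_le.1 (hSlip u (hypSnd (Y u)) (hypSnd (Y' u)))).1
    linarith
  have hkey : g u ≤ h u := by
    rw [hsnd] at hSest
    have : -(K * ‖hypSnd (fc u)‖) ≤ hypFst (Y u) - hypFst (Y' u) := by
      have := hcon
      linarith
    rw [hfst] at this
    simp only [hhdef]
    linarith
  have hMu : M < g u := hgu u humem
  have hmax : h u ≤ h u₀ := hu₀max huIcc
  have : h u₀ ≤ M := le_max_right _ _
  linarith
/-- Lemma 6.1: stability (hence uniqueness) of solutions to the Skorohod-type SDE in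
which the first coordinate of the backward process is reflected below the moving
`K`-Lipschitz hypographical surface `S(s,·)`. -/
theorem stmt15 (m : ℕ) (T : ℝ) (hT : 0 < T) (Kβ : ℝ) (hKβ : 0 ≤ Kβ)
    (β : Hyp m → Hyp m) (hβ : ∀ x y, ‖β x - β y‖ ≤ Kβ * ‖x - y‖)
    (K : ℝ) (hK : 0 ≤ K)
    (S : ℝ → EuclideanSpace ℝ (Fin m) → ℝ)
    (hScont : Continuous fun q : ℝ × EuclideanSpace ℝ (Fin m) => S q.1 q.2)
    (hSlip : ∀ s a b, |S s a - S s b| ≤ K * ‖a - b‖)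
    (ωh : ℝ → Hyp m) (hωh : ContinuousOn ωh (Set.Icc 0 T))
    (x x' : Hyp m) (Y Y' : ℝ → Hyp m) (L L' : ℝ → ℝ)
    (h1 : IsSkdSol m T β S ωh x Y L) (h2 : IsSkdSol m T β S ωh x' Y' L') :
    ∀ s ∈ Set.Icc (0 : ℝ) T,
      ‖Y s - Y' s‖ ≤ (3 + K) * ‖x - x'‖ * Real.exp ((3 + K) * Kβ * T) := by
  intro s hs
  have hβc : Continuous β := lip_continuous hKβ hβ
  set e : Hyp m := hypMk 1 0 with he
  set c : ℝ → ℝ := fun u => max 0 (min u T) with hcdef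
  have hccont : Continuous c := continuous_const.max (continuous_id.min continuous_const)
  have hcmem : ∀ u, c u ∈ Set.Icc 0 T :=
    fun u => ⟨le_max_left _ _, max_le hT.le (min_le_right _ _)⟩
  have hceq : ∀ u ∈ Set.Icc (0 : ℝ) T, c u = u := by
    intro u hu
    simp only [hcdef]
    rw [min_eq_left hu.2, max_eq_right hu.1]
  have hYc : Continuous fun u => Y (c u) := h1.1.comp_continuous hccont hcmem
  have hY'c : Continuous fun u => Y' (c u) := h2.1.comp_continuous hccont hcmem
  set F : ℝ → Hyp m := fun r => β (Y (c r)) - β (Y' (c r)) with hFdef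
  have hFcont : Continuous F := (hβc.comp hYc).sub (hβc.comp hY'c)
  have hIeq : ∀ u ∈ Set.Icc (0 : ℝ) T,
      (∫ r in (0 : ℝ)..u, (β (Y r) - β (Y' r))) = ∫ r in (0 : ℝ)..u, F r := by
    intro u hu
    apply intervalIntegral.integral_congr
    intro r hr
    rw [Set.uIcc_of_le hu.1] at hr
    have hr' : r ∈ Set.Icc (0 : ℝ) T := Set.Icc_subset_Icc_right hu.2 hr
    simp only [hFdef, hceq r hr']
  set fc : ℝ → Hyp m := fun u => (x - x') - ∫ r in (0 : ℝ)..u, F r with hfcdef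
  have hfc_orig : ∀ u ∈ Set.Icc (0 : ℝ) T,
      (x - x') - (∫ r in (0 : ℝ)..u, (β (Y r) - β (Y' r))) = fc u := by
    intro u hu
    simp only [hfcdef]
    rw [hIeq u hu]
  have hIswap : ∀ u ∈ Set.Icc (0 : ℝ) T,
      (x' - x) - (∫ r in (0 : ℝ)..u, (β (Y' r) - β (Y r))) = -(fc u) := by
    intro u hu
    have e1 : (∫ r in (0 : ℝ)..u, (β (Y' r) - β (Y r)))
        = (∫ r in (0 : ℝ)..u, β (Y' r)) - ∫ r in (0 : ℝ)..u, β (Y r) :=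
      intervalIntegral.integral_sub (skd_integrable hβc h2.1 hu) (skd_integrable hβc h1.1 hu)
    have e2 : (∫ r in (0 : ℝ)..u, (β (Y r) - β (Y' r)))
        = (∫ r in (0 : ℝ)..u, β (Y r)) - ∫ r in (0 : ℝ)..u, β (Y' r) :=
      intervalIntegral.integral_sub (skd_integrable hβc h1.1 hu) (skd_integrable hβc h2.1 hu)
    simp only [hfcdef]
    rw [← hIeq u hu, e1, e2]
    abel
  set N : ℝ → ℝ := fun u => ‖Y (c u) - Y' (c u)‖ with hNdef
  have hNc : Continuous N := (hYc.sub hY'c).norm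
  have hNeq : ∀ u ∈ Set.Icc (0 : ℝ) T, N u = ‖Y u - Y' u‖ := by
    intro u hu; simp only [hNdef, hceq u hu]
  have hNnn : ∀ u, 0 ≤ N u := fun u => norm_nonneg _
  set ψ : ℝ → ℝ := fun r => ∫ v in (0 : ℝ)..r, N v with hψdef
  have hψd : ∀ r, HasDerivAt ψ (N r) r := fun r =>
    intervalIntegral.integral_hasDerivAt_right (hNc.intervalIntegrable _ _)
      (hNc.stronglyMeasurableAtFilter _ _) hNc.continuousAt
  have hψnn : ∀ r, 0 ≤ r → 0 ≤ ψ r := fun r hr =>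
    intervalIntegral.integral_nonneg hr (fun u _ => hNnn u)
  have bound_fc : ∀ u r : ℝ, 0 ≤ u → u ≤ r → ‖fc u‖ ≤ ‖x - x'‖ + Kβ * ψ r := by
    intro u r hu hur
    have h1' : ‖fc u‖ ≤ ‖x - x'‖ + ‖∫ v in (0 : ℝ)..u, F v‖ := norm_sub_le _ _
    have h2' : ‖∫ v in (0 : ℝ)..u, F v‖ ≤ ∫ v in (0 : ℝ)..u, ‖F v‖ :=
      intervalIntegral.norm_integral_le_integral_norm hu
    have h3' : (∫ v in (0 : ℝ)..u, ‖F v‖) ≤ ∫ v in (0 : ℝ)..u, Kβ * N v := by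
      apply intervalIntegral.integral_mono_on hu (hFcont.norm.intervalIntegrable _ _)
        ((continuous_const.mul hNc).intervalIntegrable _ _)
      intro v _
      exact hβ _ _
    have h4' : (∫ v in (0 : ℝ)..u, Kβ * N v) ≤ ∫ v in (0 : ℝ)..r, Kβ * N v := by
      apply intervalIntegral.integral_mono_interval le_rfl hu hur
        (ae_of_all _ fun v => mul_nonneg hKβ (hNnn v))
        ((continuous_const.mul hNc).intervalIntegrable _ _)
    have h5' : (∫ v in (0 : ℝ)..r, Kβ * N v) = Kβ * ψ r := by
      simp only [hψdef]
      exact intervalIntegral.integral_const_mul _ _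
    linarith
  have zbound : ∀ z : Hyp m, max 0 (hypFst z + K * ‖hypSnd z‖) ≤ (1 + K) * ‖z‖ := by
    intro z
    apply max_le
    · have := norm_nonneg z; nlinarith
    · have h1' := (abs_le.1 (abs_hypFst_le z)).2
      have h2' := norm_hypSnd_le z
      nlinarith [norm_nonneg z]
  have gbound : ∀ r ∈ Set.Icc (0 : ℝ) T,
      |L r - L' r| ≤ (1 + K) * (‖x - x'‖ + Kβ * ψ r) := by
    intro r hr
    obtain ⟨u₁, hu₁, hb1⟩ := skd_onesided hT hKβ hβ hK hSlip h1 h2 hr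
    obtain ⟨u₂, hu₂, hb2⟩ := skd_onesided hT hKβ hβ hK hSlip h2 h1 hr
    have hu₁T : u₁ ∈ Set.Icc (0 : ℝ) T := ⟨hu₁.1, hu₁.2.trans hr.2⟩
    have hu₂T : u₂ ∈ Set.Icc (0 : ℝ) T := ⟨hu₂.1, hu₂.2.trans hr.2⟩
    rw [hfc_orig u₁ hu₁T] at hb1
    rw [hIswap u₂ hu₂T] at hb2
    have c1 : L r - L' r ≤ (1 + K) * ‖fc u₁‖ := hb1.trans (zbound _)
    have c2 : L' r - L r ≤ (1 + K) * ‖-(fc u₂)‖ := hb2.trans (zbound _)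
    rw [norm_neg] at c2
    have hKp : (0 : ℝ) ≤ 1 + K := by linarith
    have d1 := mul_le_mul_of_nonneg_left (bound_fc u₁ r hu₁.1 hu₁.2) hKp
    have d2 := mul_le_mul_of_nonneg_left (bound_fc u₂ r hu₂.1 hu₂.2) hKp
    rw [abs_le]
    constructor <;> linarith
  have pointwise : ∀ r ∈ Set.Icc (0 : ℝ) T,
      N r ≤ (2 + K) * ‖x - x'‖ + ((2 + K) * Kβ) * ψ r := by
    intro r hr
    have hdiff : Y r - Y' r = fc r - (L r - L' r) • e := by
      rw [← hfc_orig r hr]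
      exact skd_diff_eq hβc h1 h2 hr
    have hnorm : ‖Y r - Y' r‖ ≤ ‖fc r‖ + |L r - L' r| := by
      rw [hdiff]
      refine (norm_sub_le _ _).trans ?_
      rw [norm_smul, he, norm_hypMk_e, Real.norm_eq_abs, mul_one]
    have hb1 := bound_fc r r hr.1 le_rfl
    have hb2 := gbound r hr
    rw [hNeq r hr]
    nlinarith
  set ε : ℝ := (2 + K) * ‖x - x'‖ with hεdef
  set K' : ℝ := (2 + K) * Kβ with hK'def
  have hK'nn : 0 ≤ K' := mul_nonneg (by linarith) hKβ
  have hgron : ∀ r ∈ Set.Icc (0 : ℝ) T, ‖ψ r‖ ≤ gronwallBound 0 K' ε (r - 0) := by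
    apply norm_le_gronwallBound_of_norm_deriv_right_le (f' := N)
    · exact fun r _ => ((hψd r).continuousAt).continuousWithinAt
    · exact fun r _ => (hψd r).hasDerivWithinAt
    · simp [hψdef]
    · intro r hr
      rw [Real.norm_eq_abs, abs_of_nonneg (hNnn r), Real.norm_eq_abs,
        abs_of_nonneg (hψnn r hr.1)]
      have := pointwise r ⟨hr.1, hr.2.le⟩
      linarith
  have hψs : ψ s ≤ gronwallBound 0 K' ε s := by
    have := hgron s hs
    rwa [Real.norm_eq_abs, abs_of_nonneg (hψnn s hs.1), sub_zero] at this
  have hNs : N s ≤ ε + K' * ψ s := by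
    have := pointwise s hs
    linarith
  have hεnn : 0 ≤ ε := mul_nonneg (by linarith) (norm_nonneg _)
  have hεle : ε ≤ (3 + K) * ‖x - x'‖ := by nlinarith [norm_nonneg (x - x')]
  rw [← hNeq s hs]
  rcases eq_or_lt_of_le hK'nn with hK0 | hK0
  · have hNε : N s ≤ ε := by rw [← hK0] at hNs; linarith
    have hexp : (1 : ℝ) ≤ Real.exp ((3 + K) * Kβ * T) :=
      Real.one_le_exp (by positivity)
    calc N s ≤ (3 + K) * ‖x - x'‖ := hNε.trans hεle
      _ ≤ (3 + K) * ‖x - x'‖ * Real.exp ((3 + K) * Kβ * T) :=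
        le_mul_of_one_le_right (mul_nonneg (by linarith) (norm_nonneg _)) hexp
  · have hK'ne : K' ≠ 0 := ne_of_gt hK0
    have hgb : gronwallBound 0 K' ε s = ε / K' * (Real.exp (K' * s) - 1) := by
      rw [gronwallBound_of_K_ne_0 hK'ne]
      simp
    have hmul : K' * ψ s ≤ ε * (Real.exp (K' * s) - 1) := by
      have h0 : K' * ψ s ≤ K' * (ε / K' * (Real.exp (K' * s) - 1)) :=
        mul_le_mul_of_nonneg_left (hψs.trans_eq hgb) hK'nn
      have h1' : K' * (ε / K' * (Real.exp (K' * s) - 1))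
          = ε * (Real.exp (K' * s) - 1) := by
        field_simp
      linarith
    have step : N s ≤ ε * Real.exp (K' * s) := by
      have hring : ε + ε * (Real.exp (K' * s) - 1) = ε * Real.exp (K' * s) := by ring
      linarith
    have hexple : Real.exp (K' * s) ≤ Real.exp ((3 + K) * Kβ * T) := by
      apply Real.exp_le_exp.2
      have hKβs : 0 ≤ Kβ * s := mul_nonneg hKβ hs.1
      have hKβsT : Kβ * s ≤ Kβ * T := mul_le_mul_of_nonneg_left hs.2 hKβ
      have a1 : K' * s = (2 + K) * (Kβ * s) := by rw [hK'def]; ring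
      have a2 : (2 + K) * (Kβ * s) ≤ (3 + K) * (Kβ * s) :=
        mul_le_mul_of_nonneg_right (by linarith) hKβs
      have a3 : (3 + K) * (Kβ * s) ≤ (3 + K) * (Kβ * T) :=
        mul_le_mul_of_nonneg_left hKβsT (by linarith)
      have a4 : (3 + K) * Kβ * T = (3 + K) * (Kβ * T) := by ring
      linarith
    calc N s ≤ ε * Real.exp (K' * s) := step
      _ ≤ (3 + K) * ‖x - x'‖ * Real.exp ((3 + K) * Kβ * T) :=
        mul_le_mul hεle hexple (Real.exp_pos _).le
          (mul_nonneg (by linarith) (norm_nonneg _))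
end
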